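/- For any graph G = (V,E), h₁(B₀(G)) = (1/2)·φ(Ḡ), where Ḡ denotes the complement of G. -/

import Mathlib

open Finset Matrix

variable {V : Type*} [Fintype V] [DecidableEq V]

/-- The trace inner product `⟨A,B⟩ = ∑_{i,j} A_{ij} B_{ij}` of two matrices. -/
noncomputable def ip (A B : Matrix V V ℝ) : ℝ := ∑ i, ∑ j, A i j * B i j

/-- The matrix `C` associated to the bipartition `(P, Pᶜ)`: entry `1/2` whenever the two
indices lie on opposite sides of the bipartition, and `0` otherwise. -/
noncomputable def Cmat (P : Finset V) : Matrix V V ℝ :=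
  Matrix.of fun i j => if (i ∈ P ↔ j ∈ P) then 0 else 1/2

/-- The `(1+|V|)×(1+|V|)` block matrix `[[1, xᵀ],[x, X]]`. -/
noncomputable def dblk (x : V → ℝ) (X : Matrix V V ℝ) : Matrix (Unit ⊕ V) (Unit ⊕ V) ℝ :=
  Matrix.fromBlocks 1 (Matrix.of fun _ j => x j) (Matrix.of fun i _ => x i) X

/-- The semidefinite programming bound `h₁(G)` for a bipartite graph `G` with
bipartition `(P, Pᶜ)`. -/
noncomputable def h1 (G : SimpleGraph V) (P : Finset V) : ℝ :=
  sSup {x : ℝ | ∃ X : Matrix V V ℝ, X.PosSemidef ∧ X.trace = 1 ∧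
    (∀ i j, G.Adj i j → X i j = 0) ∧ x = ip (Cmat P) X}

/-- The semidefinite programming bound `g₁(G)` for a bipartite graph `G` with
bipartition `(P, Pᶜ)`. -/
noncomputable def g1 (G : SimpleGraph V) (P : Finset V) : ℝ :=
  sSup {x : ℝ | ∃ X : Matrix V V ℝ, (dblk (fun i => X i i) X).PosSemidef ∧
    (∀ i j, G.Adj i j → X i j = 0) ∧ x = ip (Cmat P) X}

/-- The adjacency matrix of a graph is Hermitian (over `ℝ`). -/
lemma adjHerm (G : SimpleGraph V) [DecidableRel G.Adj] : (G.adjMatrix ℝ).IsHermitian := by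
  rw [Matrix.IsHermitian, Matrix.conjTranspose_eq_transpose_of_trivial]
  exact G.isSymm_adjMatrix

/-- The list of eigenvalues of a Hermitian matrix, with multiplicities,
sorted in nondecreasing order. -/
noncomputable def eigList (A : Matrix V V ℝ) (hA : A.IsHermitian) : List ℝ :=
  (Finset.univ.val.map hA.eigenvalues).sort (· ≤ ·)

/-- The second largest eigenvalue (with multiplicities) of a Hermitian matrix. -/
noncomputable def secondLargest (A : Matrix V V ℝ) (hA : A.IsHermitian) : ℝ :=
  (eigList A hA).getD (Fintype.card V - 2) 0

/-- The smallest eigenvalue of a Hermitian matrix. -/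
noncomputable def smallestEig (A : Matrix V V ℝ) (hA : A.IsHermitian) : ℝ :=
  (eigList A hA).getD 0 0

/-- A graph is edge-transitive if its automorphism group acts transitively on edges. -/
def EdgeTransitive (G : SimpleGraph V) : Prop :=
  ∀ e f : G.edgeSet, ∃ φ : G ≃g G, φ.mapEdgeSet e = f

/-- A graph is vertex-transitive if its automorphism group acts transitively on vertices. -/
def VertexTransitive (G : SimpleGraph V) : Prop :=
  ∀ u v : V, ∃ φ : G ≃g G, φ u = v

/-- The extended bipartite double `B₀(G)` of a graph `G`: vertex set `V ⊕ V`,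
with `inl i` adjacent to `inr j` iff `G.Adj i j` or `i = j`. -/
def extBipDouble (G : SimpleGraph V) : SimpleGraph (V ⊕ V) where
  Adj x y := (∃ i j, x = Sum.inl i ∧ y = Sum.inr j ∧ (G.Adj i j ∨ i = j)) ∨
             (∃ i j, x = Sum.inr j ∧ y = Sum.inl i ∧ (G.Adj i j ∨ i = j))
  symm := by
    constructor
    rintro x y (⟨i, j, rfl, rfl, hij⟩ | ⟨i, j, rfl, rfl, hij⟩)
    · exact Or.inr ⟨i, j, rfl, rfl, hij⟩
    · exact Or.inl ⟨i, j, rfl, rfl, hij⟩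
  loopless := by
    constructor
    rintro x (⟨i, j, h1, h2, _⟩ | ⟨i, j, h1, h2, _⟩) <;> subst h1 <;> simp_all

/-- The left side of the bipartition of `V ⊕ V`. -/
def leftPart (V : Type*) [Fintype V] [DecidableEq V] : Finset (V ⊕ V) :=
  Finset.univ.filter (fun x => x.isLeft)

/-- Haemers' spectral parameter `φ(F)`: the minimum of the largest absolute value of an
eigenvalue of a real symmetric matrix `M` with `M_{ij} = 1` for all edges `{i,j}` of `F`. -/
noncomputable def phi (F : SimpleGraph V) : ℝ :=
  sInf {x : ℝ | ∃ (M : Matrix V V ℝ) (hM : M.IsHermitian),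
    (∀ i j, F.Adj i j → M i j = 1) ∧ x = sSup {y : ℝ | ∃ i, y = |hM.eigenvalues i|}}

/-!
Weak duality: if `M` is symmetric with `M = 1` on the edges of `Ḡ`, then `C` agrees with
`½ [[0, M], [M, 0]]` off the edges of `B₀(G)`, so every feasible `X` has
`⟨C, X⟩ = ½ ⟨[[0, M], [M, 0]], X⟩ ≤ ½ λ_abs(M)`.

Strong duality: for `h' > h₁(B₀(G))`, separating `(0, h')` from the compact convex image of
`{X ⪰ 0, tr X = 1}` under `X ↦ (X on the edges of B₀(G), ⟨C, X⟩)` yields a matrix `K` that agrees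
with `C` off the edges and satisfies `K ⪯ h' I` as a quadratic form. Testing `K` on `(a, a)` and
`(a, -a)` shows that the symmetrized sum `M` of its two off-diagonal blocks has `M = 1` on `Ḡ` and
`λ_abs(M) ≤ 2 h'`.
-/

section Ip
variable {ι : Type*} [Fintype ι]

theorem ip_smul_left (r : ℝ) (A X : Matrix ι ι ℝ) : ip (r • A) X = r * ip A X := by
  simp only [ip, Matrix.smul_apply, smul_eq_mul, mul_sum, mul_assoc]

theorem ip_smul_right (r : ℝ) (A X : Matrix ι ι ℝ) : ip A (r • X) = r * ip A X := by
  simp only [ip, Matrix.smul_apply, smul_eq_mul, mul_sum, mul_left_comm]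

theorem ip_sum {κ : Type*} (s : Finset κ) (A : Matrix ι ι ℝ) (X : κ → Matrix ι ι ℝ) :
    ip A (∑ k ∈ s, X k) = ∑ k ∈ s, ip A (X k) := by
  simp only [ip, Matrix.sum_apply, mul_sum]
  exact (sum_congr rfl fun _ _ => sum_comm).trans sum_comm

theorem ip_vecMulVec_self (A : Matrix ι ι ℝ) (w : ι → ℝ) :
    ip A (vecMulVec w w) = w ⬝ᵥ (A *ᵥ w) := by
  simp only [ip, vecMulVec_apply, dotProduct, mulVec, mul_sum]
  exact sum_congr rfl fun _ _ => sum_congr rfl fun _ _ => by ring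

theorem ip_eq_of_forall_not_adj {H : SimpleGraph ι} {A B X : Matrix ι ι ℝ}
    (hAB : ∀ i j, ¬ H.Adj i j → A i j = B i j) (hX : ∀ i j, H.Adj i j → X i j = 0) :
    ip A X = ip B X := by
  refine sum_congr rfl fun i _ => sum_congr rfl fun j _ => ?_
  by_cases hij : H.Adj i j
  · simp [hX i j hij]
  · rw [hAB i j hij]

theorem ip_le_mul_trace {T X : Matrix ι ι ℝ} {c : ℝ} (hT : ∀ w, w ⬝ᵥ (T *ᵥ w) ≤ c * (w ⬝ᵥ w))
    (hX : X.PosSemidef) : ip T X ≤ c * X.trace := by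
  obtain ⟨m, v, rfl⟩ := posSemidef_iff_eq_sum_vecMulVec.mp hX
  simp only [star_trivial, ip_sum, ip_vecMulVec_self, trace_sum, trace_vecMulVec, mul_sum]
  exact sum_le_sum fun k _ => hT (v k)

theorem convex_setOf_posSemidef_trace_eq_one :
    Convex ℝ {X : Matrix ι ι ℝ | X.PosSemidef ∧ X.trace = 1} := by
  rintro X ⟨hX, htrX⟩ Y ⟨hY, htrY⟩ a b ha hb hab
  exact ⟨(hX.smul ha).add (hY.smul hb), by simp [trace_add, trace_smul, htrX, htrY, hab]⟩

theorem sumElim_dotProduct_fromBlocks_zero_mulVec {κ : Type*} [Fintype κ]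
    (P : Matrix ι κ ℝ) (Q : Matrix κ ι ℝ) (a : ι → ℝ) (b : κ → ℝ) :
    Sum.elim a b ⬝ᵥ (fromBlocks 0 P Q 0 *ᵥ Sum.elim a b) = a ⬝ᵥ (P *ᵥ b) + b ⬝ᵥ (Q *ᵥ a) := by
  simp [fromBlocks_mulVec, sumElim_dotProduct_sumElim]

theorem dotProduct_fromBlocks_zero_mulVec_le {M : Matrix ι ι ℝ} {c : ℝ}
    (hM : ∀ v, |v ⬝ᵥ (M *ᵥ v)| ≤ c * (v ⬝ᵥ v)) (w : ι ⊕ ι → ℝ) :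
    w ⬝ᵥ (fromBlocks 0 M M 0 *ᵥ w) ≤ c * (w ⬝ᵥ w) := by
  rw [← Sum.elim_comp_inl_inr w, sumElim_dotProduct_fromBlocks_zero_mulVec,
    sumElim_dotProduct_sumElim]
  set a := w ∘ Sum.inl
  set b := w ∘ Sum.inr
  have hplus := (abs_le.mp (hM (a + b))).2
  have hminus := (abs_le.mp (hM (a - b))).1
  simp only [mulVec_add, mulVec_sub, dotProduct_add, add_dotProduct, dotProduct_sub,
    sub_dotProduct] at hplus hminus
  linarith

end Ip

section Spectral
variable {ι : Type*} [Fintype ι] [DecidableEq ι]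

open scoped MatrixOrder in
theorem Matrix.IsHermitian.eigenvalues_le_iff {M : Matrix ι ι ℝ} (hM : M.IsHermitian) {c : ℝ} :
    (∀ i, hM.eigenvalues i ≤ c) ↔ ∀ w, w ⬝ᵥ (M *ᵥ w) ≤ c * (w ⬝ᵥ w) := by
  rw [show (∀ i, hM.eigenvalues i ≤ c) ↔ M ≤ algebraMap ℝ _ c by
      rw [le_algebraMap_iff_spectrum_le hM.isSelfAdjoint, hM.spectrum_real_eq_range_eigenvalues,
        Set.forall_mem_range], Matrix.le_iff,
    Algebra.algebraMap_eq_smul_one, posSemidef_iff_dotProduct_mulVec]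
  simp only [star_trivial, sub_mulVec, smul_mulVec, one_mulVec, dotProduct_sub, dotProduct_smul,
    smul_eq_mul, sub_nonneg]
  exact and_iff_right ((isHermitian_one.smul (IsSelfAdjoint.all c)).sub hM)

open scoped MatrixOrder in
theorem Matrix.IsHermitian.le_eigenvalues_iff {M : Matrix ι ι ℝ} (hM : M.IsHermitian) {c : ℝ} :
    (∀ i, c ≤ hM.eigenvalues i) ↔ ∀ w, c * (w ⬝ᵥ w) ≤ w ⬝ᵥ (M *ᵥ w) := by
  rw [show (∀ i, c ≤ hM.eigenvalues i) ↔ algebraMap ℝ _ c ≤ M by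
      rw [algebraMap_le_iff_le_spectrum hM.isSelfAdjoint, hM.spectrum_real_eq_range_eigenvalues,
        Set.forall_mem_range], Matrix.le_iff,
    Algebra.algebraMap_eq_smul_one, posSemidef_iff_dotProduct_mulVec]
  simp only [star_trivial, sub_mulVec, smul_mulVec, one_mulVec, dotProduct_sub, dotProduct_smul,
    smul_eq_mul, sub_nonneg]
  exact and_iff_right (hM.sub (isHermitian_one.smul (IsSelfAdjoint.all c)))

theorem Matrix.IsHermitian.abs_eigenvalues_le_iff {M : Matrix ι ι ℝ} (hM : M.IsHermitian)
    {c : ℝ} : (∀ i, |hM.eigenvalues i| ≤ c) ↔ ∀ w, |w ⬝ᵥ (M *ᵥ w)| ≤ c * (w ⬝ᵥ w) := by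
  simp only [abs_le, forall_and, hM.eigenvalues_le_iff, hM.le_eigenvalues_iff, neg_mul]

theorem abs_eigenvalues_le_sSup {M : Matrix ι ι ℝ} (hM : M.IsHermitian) (i : ι) :
    |hM.eigenvalues i| ≤ sSup {y : ℝ | ∃ i, y = |hM.eigenvalues i|} :=
  le_csSup ((Set.finite_range fun i => |hM.eigenvalues i|).bddAbove.mono
    (by rintro _ ⟨k, rfl⟩; exact ⟨k, rfl⟩)) ⟨i, rfl⟩

theorem sSup_abs_eigenvalues_nonneg {M : Matrix ι ι ℝ} (hM : M.IsHermitian) :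
    0 ≤ sSup {y : ℝ | ∃ i, y = |hM.eigenvalues i|} :=
  Real.sSup_nonneg (by rintro _ ⟨i, rfl⟩; exact abs_nonneg _)

end Spectral

section Duality
variable {ι : Type*} [Fintype ι] [DecidableEq ι]

theorem Matrix.PosSemidef.abs_apply_le_trace {X : Matrix ι ι ℝ} (hX : X.PosSemidef) (i j : ι) :
    |X i j| ≤ X.trace := by
  have hdiag (k : ι) : X k k ≤ X.trace :=
    single_le_sum (f := fun l => X l l) (fun l _ => hX.diag_nonneg) (mem_univ k)
  have hsymm : X j i = X i j := by simpa using hX.isHermitian.apply i j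
  have hquad (s : ℝ) : 0 ≤ X i i + 2 * s * X i j + s ^ 2 * X j j := by
    have := hX.dotProduct_mulVec_nonneg (Pi.single i 1 + s • Pi.single j 1)
    simp [mulVec_add, mulVec_smul, hsymm] at this
    linarith
  rw [abs_le]
  constructor <;> nlinarith [hquad 1, hquad (-1), hdiag i, hdiag j]

theorem isCompact_setOf_posSemidef_trace_eq_one :
    IsCompact {X : Matrix ι ι ℝ | X.PosSemidef ∧ X.trace = 1} := by
  have hclosed : IsClosed {X : Matrix ι ι ℝ | X.PosSemidef ∧ X.trace = 1} := by
    simp only [posSemidef_iff_dotProduct_mulVec, IsHermitian, Set.ofPred_and, Set.ofPred_forall]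
    refine ((isClosed_eq ?_ continuous_id).inter
      (isClosed_iInter fun w => isClosed_le continuous_const ?_)).inter
      (isClosed_eq ?_ continuous_const) <;> fun_prop
  refine IsCompact.of_isClosed_subset (isCompact_univ_pi fun _ => isCompact_univ_pi fun _ =>
    isCompact_Icc (a := (-1 : ℝ)) (b := 1)) hclosed ?_
  rintro X ⟨hX, htr⟩ i - j -
  exact abs_le.mp (htr ▸ hX.abs_apply_le_trace i j)

theorem exists_posSemidef_isDiag_trace_eq_one [Nonempty ι] :
    ∃ X : Matrix ι ι ℝ, X.PosSemidef ∧ X.IsDiag ∧ X.trace = 1 :=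
  ⟨(Fintype.card ι : ℝ)⁻¹ • 1, PosSemidef.one.smul (by positivity), isDiag_one.smul _,
    by simp [trace_smul]⟩

theorem LinearMap.apply_eq_ip (g : Matrix ι ι ℝ →ₗ[ℝ] ℝ) (X : Matrix ι ι ℝ) :
    g X = ip (Matrix.of fun i j => g (Matrix.single i j 1)) X := by
  conv_lhs => rw [matrix_eq_sum_single X]
  simp only [map_sum, ip, of_apply]
  refine sum_congr rfl fun i _ => sum_congr rfl fun j _ => ?_
  rw [show Matrix.single i j (X i j) = X i j • Matrix.single i j 1 by simp, map_smul, smul_eq_mul,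
    mul_comm]

theorem exists_ip_lt_of_forall_ip_le [Nonempty ι] (H : SimpleGraph ι) (C : Matrix ι ι ℝ)
    {h h' : ℝ} (hC : ∀ X : Matrix ι ι ℝ, X.PosSemidef → X.trace = 1 →
      (∀ i j, H.Adj i j → X i j = 0) → ip C X ≤ h) (hh' : h < h') :
    ∃ K : Matrix ι ι ℝ, (∀ i j, ¬ H.Adj i j → K i j = C i j) ∧
      ∀ X : Matrix ι ι ℝ, X.PosSemidef → X.trace = 1 → ip K X < h' := by
  classical
  let e : Matrix ι ι ℝ →ₗ[ℝ] (ι × ι → ℝ) × ℝ :=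
    { toFun X := (fun p => if H.Adj p.1 p.2 then X p.1 p.2 else 0, ip C X)
      map_add' X Y := by
        ext p
        · by_cases hp : H.Adj p.1 p.2 <;> simp [hp]
        · simp [ip, mul_add, sum_add_distrib]
      map_smul' r X := by
        ext p
        · by_cases hp : H.Adj p.1 p.2 <;> simp [hp]
        · simp [ip_smul_right] }
  have hq : ((0 : ι × ι → ℝ), h') ∉ e '' {X | X.PosSemidef ∧ X.trace = 1} := by
    rintro ⟨X, ⟨hX, htr⟩, hXq⟩
    simp only [e, LinearMap.coe_mk, AddHom.coe_mk, Prod.mk.injEq, funext_iff] at hXq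
    have hXH (i j : ι) (hij : H.Adj i j) : X i j = 0 := by simpa [hij] using hXq.1 (i, j)
    linarith [hC X hX htr hXH]
  obtain ⟨f, u, hfD, hfq⟩ := geometric_hahn_banach_closed_point
    (convex_setOf_posSemidef_trace_eq_one.linear_image e)
    (isCompact_setOf_posSemidef_trace_eq_one.image e.continuous_of_finiteDimensional).isClosed hq
  have hf0 (v : ℝ) : f (0, v) = v * f (0, 1) := by
    rw [← smul_eq_mul, ← map_smul, Prod.smul_mk, smul_zero, smul_eq_mul, mul_one]
  have hfD' (X : Matrix ι ι ℝ) (hX : X.PosSemidef) (htr : X.trace = 1) : f (e X) < u :=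
    hfD _ ⟨X, ⟨hX, htr⟩, rfl⟩
  rw [hf0] at hfq
  -- a feasible point forces the separating functional to weigh the objective positively
  have hβ : 0 < f (0, 1) := by
    obtain ⟨X₀, hX₀, hdiag, htr₀⟩ := exists_posSemidef_isDiag_trace_eq_one (ι := ι)
    have hX₀H (i j : ι) (hij : H.Adj i j) : X₀ i j = 0 := hdiag hij.ne
    have he : e X₀ = (0, ip C X₀) := by
      ext p
      · by_cases hp : H.Adj p.1 p.2 <;> simp [e, hp, hX₀H]
      · rfl
    have := hfD' X₀ hX₀ htr₀
    rw [he, hf0] at this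
    nlinarith [hC X₀ hX₀ htr₀ hX₀H]
  let g : Matrix ι ι ℝ →ₗ[ℝ] ℝ := f.toLinearMap ∘ₗ e
  refine ⟨(f (0, 1))⁻¹ • Matrix.of fun i j => g (Matrix.single i j 1), fun i j hij => ?_,
    fun X hX htr => ?_⟩
  · have he : e (Matrix.single i j 1) = (0, C i j) := by
      ext ⟨k, l⟩
      · by_cases hkl : i = k ∧ j = l
        · obtain ⟨rfl, rfl⟩ := hkl
          simp [e, hij]
        · simp [e, Matrix.single_apply, hkl]
      · simp [e, ip, Matrix.single_apply, ite_and]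
    show (f (0, 1))⁻¹ • f (e (Matrix.single i j 1)) = C i j
    rw [he, hf0 (C i j), smul_eq_mul, mul_comm, mul_inv_cancel_right₀ hβ.ne']
  · rw [ip_smul_left, ← LinearMap.apply_eq_ip, inv_mul_lt_iff₀ hβ, mul_comm]
    exact (hfD' X hX htr).trans hfq

theorem exists_quadratic_le_of_forall_ip_le (H : SimpleGraph ι) (C : Matrix ι ι ℝ) {h h' : ℝ}
    (hC : ∀ X : Matrix ι ι ℝ, X.PosSemidef → X.trace = 1 →
      (∀ i j, H.Adj i j → X i j = 0) → ip C X ≤ h) (hh' : h < h') :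
    ∃ K : Matrix ι ι ℝ, (∀ i j, ¬ H.Adj i j → K i j = C i j) ∧
      ∀ w, w ⬝ᵥ (K *ᵥ w) ≤ h' * (w ⬝ᵥ w) := by
  rcases isEmpty_or_nonempty ι with hι | hι
  · exact ⟨C, fun _ _ _ => rfl, fun w => by simp [dotProduct]⟩
  obtain ⟨K, hKC, hK⟩ := exists_ip_lt_of_forall_ip_le H C hC hh'
  refine ⟨K, hKC, fun w => ?_⟩
  rcases (dotProduct_self_star_nonneg w).eq_or_lt with hw | hw
  all_goals simp only [star_trivial] at hw
  · simp [dotProduct_self_eq_zero.mp hw.symm]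
  have := hK ((w ⬝ᵥ w)⁻¹ • vecMulVec w w) ((posSemidef_vecMulVec_self_star w).smul (by positivity))
    (by rw [trace_smul, trace_vecMulVec, smul_eq_mul, inv_mul_cancel₀ hw.ne'])
  rw [ip_smul_right, ip_vecMulVec_self, inv_mul_lt_iff₀ hw] at this
  linarith

theorem le_h1 {H : SimpleGraph ι} (P : Finset ι) {X : Matrix ι ι ℝ} (hX : X.PosSemidef)
    (htr : X.trace = 1) (hXH : ∀ i j, H.Adj i j → X i j = 0) : ip (Cmat P) X ≤ h1 H P := by
  refine le_csSup ?_ ⟨X, hX, htr, hXH, rfl⟩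
  refine ((isCompact_setOf_posSemidef_trace_eq_one.image
    (f := ip (Cmat P)) (by unfold ip; fun_prop)).bddAbove).mono ?_
  rintro _ ⟨Y, hY, htrY, -, rfl⟩
  exact ⟨Y, ⟨hY, htrY⟩, rfl⟩

theorem h1_le {H : SimpleGraph ι} {P : Finset ι} {b : ℝ} (hb : 0 ≤ b)
    (h : ∀ X : Matrix ι ι ℝ, X.PosSemidef → X.trace = 1 → (∀ i j, H.Adj i j → X i j = 0) →
      ip (Cmat P) X ≤ b) : h1 H P ≤ b := by
  refine Real.sSup_le ?_ hb
  rintro _ ⟨X, hX, htr, hXH, rfl⟩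
  exact h X hX htr hXH

theorem h1_nonneg (H : SimpleGraph ι) (P : Finset ι) : 0 ≤ h1 H P := by
  rcases isEmpty_or_nonempty ι with hι | hι
  · refine Real.sSup_nonneg ?_
    rintro _ ⟨X, -, htr, -⟩
    simp [trace] at htr
  obtain ⟨X, hX, hdiag, htr⟩ := exists_posSemidef_isDiag_trace_eq_one (ι := ι)
  have hip : ip (Cmat P) X = 0 := by
    refine sum_eq_zero fun i _ => sum_eq_zero fun j _ => ?_
    by_cases hij : i = j
    · simp [hij, Cmat]
    · simp [hdiag hij]
  exact hip ▸ le_h1 P hX htr fun i j hij => hdiag hij.ne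

theorem phi_le {F : SimpleGraph ι} {M : Matrix ι ι ℝ} (hM : M.IsHermitian)
    (hMF : ∀ i j, F.Adj i j → M i j = 1) :
    phi F ≤ sSup {y : ℝ | ∃ i, y = |hM.eigenvalues i|} := by
  refine csInf_le ⟨0, ?_⟩ ⟨M, hM, hMF, rfl⟩
  rintro _ ⟨N, hN, -, rfl⟩
  exact sSup_abs_eigenvalues_nonneg hN

theorem le_phi {F : SimpleGraph ι} {b : ℝ}
    (h : ∀ (M : Matrix ι ι ℝ) (hM : M.IsHermitian), (∀ i j, F.Adj i j → M i j = 1) →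
      b ≤ sSup {y : ℝ | ∃ i, y = |hM.eigenvalues i|}) : b ≤ phi F := by
  have hJ : (Matrix.of fun _ _ => (1 : ℝ) : Matrix ι ι ℝ).IsHermitian := by
    ext i j
    simp
  refine le_csInf ⟨_, _, hJ, fun _ _ _ => rfl, rfl⟩ ?_
  rintro _ ⟨M, hM, hMF, rfl⟩
  exact h M hM hMF

end Duality

omit [Fintype V] [DecidableEq V] in
theorem not_extBipDouble_adj_of_compl_adj {G : SimpleGraph V} {i j : V} (h : Gᶜ.Adj i j) :
    ¬ (extBipDouble G).Adj (Sum.inl i) (Sum.inr j) ∧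
      ¬ (extBipDouble G).Adj (Sum.inr i) (Sum.inl j) := by
  rw [SimpleGraph.compl_adj] at h
  simp [extBipDouble, h.1, h.1.symm, h.2, G.adj_comm j i]

theorem cmat_leftPart_eq_of_not_adj {G : SimpleGraph V} {M : Matrix V V ℝ}
    (hM : ∀ i j, Gᶜ.Adj i j → M i j = 1) (x y : V ⊕ V) (hxy : ¬ (extBipDouble G).Adj x y) :
    Cmat (leftPart V) x y = ((1 / 2 : ℝ) • fromBlocks 0 M M 0) x y := by
  rcases x with i | i <;> rcases y with j | j <;> simp [Cmat, leftPart, extBipDouble] at hxy ⊢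
  · rw [hM i j ((G.compl_adj i j).mpr ⟨hxy.2, hxy.1⟩)]
  · rw [hM i j ((G.compl_adj i j).mpr ⟨Ne.symm hxy.2, fun h => hxy.1 h.symm⟩)]

theorem ip_cmat_leftPart_le {G : SimpleGraph V} {M : Matrix V V ℝ} (hM : M.IsHermitian)
    (hMG : ∀ i j, Gᶜ.Adj i j → M i j = 1) {X : Matrix (V ⊕ V) (V ⊕ V) ℝ} (hX : X.PosSemidef)
    (htr : X.trace = 1) (hXG : ∀ x y, (extBipDouble G).Adj x y → X x y = 0) :
    ip (Cmat (leftPart V)) X ≤ sSup {y : ℝ | ∃ i, y = |hM.eigenvalues i|} / 2 := by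
  rw [ip_eq_of_forall_not_adj (cmat_leftPart_eq_of_not_adj hMG) hXG, ip_smul_left]
  have := ip_le_mul_trace (dotProduct_fromBlocks_zero_mulVec_le
    (hM.abs_eigenvalues_le_iff.mp (abs_eigenvalues_le_sSup hM))) hX
  rw [htr] at this
  linarith

theorem exists_isHermitian_of_quadratic_le {G : SimpleGraph V} {K : Matrix (V ⊕ V) (V ⊕ V) ℝ}
    {c : ℝ} (hKC : ∀ x y, ¬ (extBipDouble G).Adj x y → K x y = Cmat (leftPart V) x y)
    (hK : ∀ w, w ⬝ᵥ (K *ᵥ w) ≤ c * (w ⬝ᵥ w)) :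
    ∃ (M : Matrix V V ℝ) (_ : M.IsHermitian), (∀ i j, Gᶜ.Adj i j → M i j = 1) ∧
      ∀ a, |a ⬝ᵥ (M *ᵥ a)| ≤ 2 * c * (a ⬝ᵥ a) := by
  have hblocks : K = fromBlocks 0 K.toBlocks₁₂ K.toBlocks₂₁ 0 := by
    ext (i | i) (j | j) <;> simp [toBlocks₁₂, toBlocks₂₁]
    all_goals rw [hKC _ _ (by simp [extBipDouble])]; simp [Cmat, leftPart]
  have hquad (a b : V → ℝ) : Sum.elim a b ⬝ᵥ (K *ᵥ Sum.elim a b) =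
      a ⬝ᵥ (K.toBlocks₁₂ *ᵥ b) + b ⬝ᵥ (K.toBlocks₂₁ *ᵥ a) := by
    rw [hblocks, sumElim_dotProduct_fromBlocks_zero_mulVec]
    simp
  set Z := K.toBlocks₁₂ + K.toBlocks₂₁
  refine ⟨(1 / 2 : ℝ) • (Z + Zᵀ), ?_, fun i j hij => ?_, fun a => ?_⟩
  · ext i j
    simp only [conjTranspose_apply, star_trivial, Matrix.smul_apply, Matrix.add_apply,
      transpose_apply, add_comm]
  · obtain ⟨hlr, hrl⟩ := not_extBipDouble_adj_of_compl_adj hij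
    obtain ⟨hlr', hrl'⟩ := not_extBipDouble_adj_of_compl_adj hij.symm
    simp only [Z, Matrix.smul_apply, Matrix.add_apply, transpose_apply, toBlocks₁₂, toBlocks₂₁,
      of_apply, hKC _ _ hlr, hKC _ _ hrl, hKC _ _ hlr', hKC _ _ hrl']
    norm_num [Cmat, leftPart]
  · have hsymm : a ⬝ᵥ (Zᵀ *ᵥ a) = a ⬝ᵥ (Z *ᵥ a) := by
      rw [mulVec_transpose, dotProduct_comm, dotProduct_mulVec]
    have hplus := hK (Sum.elim a a)
    have hminus := hK (Sum.elim a (-a))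
    rw [hquad, sumElim_dotProduct_sumElim] at hplus hminus
    simp only [smul_mulVec, add_mulVec, dotProduct_smul, dotProduct_add, hsymm, smul_eq_mul, Z]
    simp only [mulVec_neg, dotProduct_neg, neg_dotProduct, neg_neg] at hminus
    rw [abs_le]
    constructor <;> linarith

/-- for any graph `G`, `h₁(B₀(G)) = (1/2)·φ(Ḡ)`. -/
theorem stmt12 (G : SimpleGraph V) :
    h1 (extBipDouble G) (leftPart V) = (1/2 : ℝ) * phi Gᶜ := by
  set h := h1 (extBipDouble G) (leftPart V)
  refine le_antisymm ?_ (le_of_forall_gt_imp_ge_of_dense fun h' hh' => ?_)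
  · have : 2 * h ≤ phi Gᶜ := le_phi fun M hM hMG => by
      have := h1_le (by linarith [sSup_abs_eigenvalues_nonneg hM])
        fun X hX htr hXG => ip_cmat_leftPart_le hM hMG hX htr hXG
      linarith
    linarith
  · obtain ⟨K, hKC, hK⟩ := exists_quadratic_le_of_forall_ip_le _ _
      (fun X hX htr hXG => le_h1 (leftPart V) hX htr hXG) hh'
    obtain ⟨M, hM, hMG, hMq⟩ := exists_isHermitian_of_quadratic_le hKC hK
    have hh'0 : 0 ≤ h' := (h1_nonneg _ _).trans hh'.le
    have := (phi_le hM hMG).trans <| Real.sSup_le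
      (by rintro _ ⟨i, rfl⟩; exact hM.abs_eigenvalues_le_iff.mpr hMq i) (by positivity)
    linarith
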